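/- Fix real numbers a < b, α ∈ (0,1), β ∈ [0,1], and set γ = α + β(1−α). Let F ∈ C_{1−γ}[a,b] and z_a ∈ ℝ, and define z(t) = z_a (t−a)^{γ−1}/Γ(γ) + (1/Γ(α)) ∫_a^t (t−s)^{α−1} F(s) ds for t ∈ (a,b]. Then for every t ∈ (a,b], (I^{1−γ}_a z)(t) = z_a + (1/Γ(1−γ+α)) ∫_a^t (t−s)^{α−γ} F(s) ds; in particular lim_{t→a^+} (I^{1−γ}_a z)(t) = z_a and lim_{t→b^−} (I^{1−γ}_a z)(t) = z_a + (1/Γ(1−γ+α)) ∫_a^b (b−s)^{α−γ} F(s) ds. -/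

import Mathlib

open MeasureTheory Set intervalIntegral


/-- The Riemann–Liouville fractional integral of order `μ` based at `a`:
`(I^μ_a g)(t) = (1/Γ(μ)) ∫_a^t (t−s)^{μ−1} g(s) ds` for `μ > 0`
(with the usual convention `I⁰_a = id` in the degenerate case `μ = 0`). -/
noncomputable def rlInt (a μ : ℝ) (g : ℝ → ℝ) (t : ℝ) : ℝ :=
  if μ = 0 then g t
  else (1 / Real.Gamma μ) * ∫ s in a..t, (t - s) ^ (μ - 1) * g s

/-- Membership in the weighted space `C_w[a,b]`: `g : (a,b] → ℝ` is such that
`t ↦ (t−a)^w g(t)` extends to a continuous function on `[a,b]`. -/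
def memCw (a b w : ℝ) (g : ℝ → ℝ) : Prop :=
  ∃ G : ℝ → ℝ, ContinuousOn G (Set.Icc a b) ∧
    ∀ t ∈ Set.Ioc a b, G t = (t - a) ^ w * g t

lemma real_beta {p q : ℝ} (hp : 0 < p) (hq : 0 < q) :
    ∫ τ in (0:ℝ)..1, (1 - τ) ^ (p - 1) * τ ^ (q - 1) =
      Real.Gamma p * Real.Gamma q / Real.Gamma (p + q) := by
  have hB := Complex.Gamma_mul_Gamma_eq_betaIntegral (s := (q:ℂ)) (t := (p:ℂ))
    (by simpa using hq) (by simpa using hp)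
  have hBeq : Complex.betaIntegral (q:ℂ) (p:ℂ) =
      ((∫ τ in (0:ℝ)..1, (1 - τ) ^ (p - 1) * τ ^ (q - 1) : ℝ) : ℂ) := by
    rw [Complex.betaIntegral, ← intervalIntegral.integral_ofReal]
    refine intervalIntegral.integral_congr fun x hx => ?_
    rw [Set.uIcc_of_le (by norm_num : (0:ℝ) ≤ 1)] at hx
    push_cast
    rw [Complex.ofReal_cpow hx.1, Complex.ofReal_cpow (by linarith [hx.2])]
    push_cast
    ring
  rw [hBeq] at hB
  have h2 : ((Real.Gamma q * Real.Gamma p : ℝ) : ℂ) =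
      ((Real.Gamma (q + p) * ∫ τ in (0:ℝ)..1, (1 - τ) ^ (p - 1) * τ ^ (q - 1) : ℝ) : ℂ) := by
    push_cast
    rw [← Complex.Gamma_ofReal, ← Complex.Gamma_ofReal, ← Complex.Gamma_ofReal]
    push_cast
    exact hB
  have h3 := Complex.ofReal_injective h2
  have hΓ : Real.Gamma (p + q) ≠ 0 := (Real.Gamma_pos_of_pos (by linarith)).ne'
  rw [add_comm q p] at h3
  field_simp
  linarith [h3]

lemma subst_affine {c t : ℝ} (p q : ℝ) (hct : c < t) (H : ℝ → ℝ) :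
    ∫ s in c..t, (t - s) ^ (p - 1) * ((s - c) ^ (q - 1) * H s) =
      (t - c) ^ (p + q - 1) *
        ∫ τ in (0:ℝ)..1, (1 - τ) ^ (p - 1) * (τ ^ (q - 1) * H (c + (t - c) * τ)) := by
  have he : (0:ℝ) < t - c := by linarith
  have h1 := intervalIntegral.integral_comp_mul_add
    (a := (0:ℝ)) (b := 1) (c := t - c)
    (f := fun s => (t - s) ^ (p - 1) * ((s - c) ^ (q - 1) * H s)) he.ne' c
  simp only [mul_zero, zero_add, mul_one, sub_add_cancel, smul_eq_mul] at h1
  have h2 : ∀ x ∈ Set.uIcc (0:ℝ) 1,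
      (t - ((t - c) * x + c)) ^ (p - 1) * ((((t - c) * x + c) - c) ^ (q - 1) *
        H ((t - c) * x + c)) =
      (t - c) ^ (p + q - 2) *
        ((1 - x) ^ (p - 1) * (x ^ (q - 1) * H (c + (t - c) * x))) := by
    intro x hx
    rw [Set.uIcc_of_le (by norm_num : (0:ℝ) ≤ 1)] at hx
    have e1 : t - ((t - c) * x + c) = (t - c) * (1 - x) := by ring
    have e2 : ((t - c) * x + c) - c = (t - c) * x := by ring
    rw [e1, e2, Real.mul_rpow he.le (by linarith [hx.2]), Real.mul_rpow he.le hx.1]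
    have e3 : (t - c) ^ (p - 1) * (t - c) ^ (q - 1) = (t - c) ^ (p + q - 2) := by
      rw [← Real.rpow_add he]; ring_nf
    rw [show c + (t - c) * x = (t - c) * x + c from by ring, ← e3]
    ring
  rw [intervalIntegral.integral_congr h2, intervalIntegral.integral_const_mul] at h1
  have h3 : (t - c) ^ (p + q - 1) = (t - c) * (t - c) ^ (p + q - 2) := by
    rw [show p + q - 1 = 1 + (p + q - 2) from by ring, Real.rpow_add he, Real.rpow_one]
  rw [h3, mul_assoc, h1]
  field_simp


lemma rpow_le_max {A B x e : ℝ} (hA : 0 < A) (h1 : A ≤ x) (h2 : x ≤ B) :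
    x ^ e ≤ max (A ^ e) (B ^ e) := by
  rcases le_or_gt 0 e with he | he
  · exact le_max_of_le_right (Real.rpow_le_rpow (by linarith) h2 he)
  · exact le_max_of_le_left (Real.rpow_le_rpow_of_nonpos hA h1 he.le)

lemma kernel_integrableOn {c d p q : ℝ} (hcd : c < d) (hp : 0 < p) (hq : 0 < q) :
    IntegrableOn (fun u => (d - u) ^ (p - 1) * (u - c) ^ (q - 1)) (Set.Ioo c d) := by
  set m := (c + d) / 2 with hm
  have hcm : c < m := by simp only [hm]; linarith
  have hmd : m < d := by simp only [hm]; linarith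
  have I1 : IntegrableOn (fun u => (d - u) ^ (p - 1) * (u - c) ^ (q - 1)) (Set.Ioc c m) := by
    have hg : IntegrableOn (fun u : ℝ => (u - c) ^ (q - 1)) (Set.Ioc c m) := by
      have := (intervalIntegrable_rpow' (a := 0) (b := m - c) (by linarith : (-1:ℝ) < q - 1)).comp_sub_right c
      simpa using this.1
    refine Integrable.bdd_mul hg (c := max ((d - m) ^ (p - 1)) ((d - c) ^ (p - 1)))
      (f := fun u => (d - u) ^ (p - 1)) (by fun_prop : Measurable _).aestronglyMeasurable ?_
    filter_upwards [ae_restrict_mem measurableSet_Ioc] with u hu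
    rw [Real.norm_eq_abs, abs_of_nonneg (Real.rpow_nonneg (by linarith [hu.2]) _)]
    exact rpow_le_max (by linarith) (by linarith [hu.2]) (by linarith [hu.1])
  have I2 : IntegrableOn (fun u => (d - u) ^ (p - 1) * (u - c) ^ (q - 1)) (Set.Ioc m d) := by
    have hg : IntegrableOn (fun u : ℝ => (d - u) ^ (p - 1)) (Set.Ioc m d) := by
      have := (intervalIntegrable_rpow' (a := 0) (b := d - m) (by linarith : (-1:ℝ) < p - 1)).comp_sub_left d
      simp only [sub_sub_cancel, sub_zero] at this
      exact this.2
    have := Integrable.bdd_mul hg (c := max ((m - c) ^ (q - 1)) ((d - c) ^ (q - 1)))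
      (f := fun u => (u - c) ^ (q - 1)) (by fun_prop : Measurable _).aestronglyMeasurable ?_
    · exact this.congr (Filter.EventuallyEq.of_eq (funext fun u => mul_comm _ _))
    filter_upwards [ae_restrict_mem measurableSet_Ioc] with u hu
    rw [Real.norm_eq_abs, abs_of_nonneg (Real.rpow_nonneg (by linarith [hu.1]) _)]
    exact rpow_le_max (by linarith) (by linarith [hu.1]) (by linarith [hu.2])
  exact (I1.union I2).mono_set (fun u hu => by
    rcases le_or_gt u m with h | h
    · exact Or.inl ⟨hu.1, h⟩
    · exact Or.inr ⟨h, hu.2.le⟩)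


lemma kIoo_int {p q : ℝ} (hp : 0 < p) (hq : 0 < q) :
    IntegrableOn (fun τ : ℝ => (1 - τ) ^ (p - 1) * τ ^ (q - 1)) (Set.Ioo 0 1) := by
  have := kernel_integrableOn (c := 0) (d := 1) (by norm_num) hp hq
  simpa using this

lemma weighted_integrableOn {c d p q C : ℝ} (hcd : c < d) (hp : 0 < p) (hq : 0 < q)
    {H : ℝ → ℝ} (hH : AEStronglyMeasurable H (volume.restrict (Set.Ioo c d)))
    (hbd : ∀ u ∈ Set.Ioo c d, |H u| ≤ C * (u - c) ^ (q - 1)) :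
    IntegrableOn (fun u => (d - u) ^ (p - 1) * H u) (Set.Ioo c d) := by
  refine ((kernel_integrableOn hcd hp hq).const_mul C).mono'
    (((by fun_prop : Measurable fun u : ℝ => (d - u) ^ (p - 1)).aestronglyMeasurable).mul hH) ?_
  filter_upwards [ae_restrict_mem measurableSet_Ioo] with u hu
  rw [Real.norm_eq_abs, abs_mul, abs_of_nonneg (Real.rpow_nonneg (by linarith [hu.2]) _)]
  calc (d - u) ^ (p - 1) * |H u| ≤ (d - u) ^ (p - 1) * (C * (u - c) ^ (q - 1)) := by
        exact mul_le_mul_of_nonneg_left (hbd u hu) (Real.rpow_nonneg (by linarith [hu.2]) _)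
    _ = C * ((d - u) ^ (p - 1) * (u - c) ^ (q - 1)) := by ring

lemma Wcont {G : ℝ → ℝ} {C : ℝ} (hG : Continuous G) (hbd : ∀ x, |G x| ≤ C)
    (p q a : ℝ) (hp : 0 < p) (hq : 0 < q) :
    Continuous fun t : ℝ =>
      ∫ τ in Set.Ioo (0:ℝ) 1, (1 - τ) ^ (p - 1) * (τ ^ (q - 1) * G (a + (t - a) * τ)) := by
  apply continuous_of_dominated (bound := fun τ => (1 - τ) ^ (p - 1) * τ ^ (q - 1) * C)
  · intro t
    exact ((by fun_prop : Measurable fun τ : ℝ => (1 - τ) ^ (p - 1) *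
      (τ ^ (q - 1) * G (a + (t - a) * τ)))).aestronglyMeasurable
  · intro t
    filter_upwards [ae_restrict_mem measurableSet_Ioo] with τ hτ
    rw [Real.norm_eq_abs, abs_mul, abs_mul,
      abs_of_nonneg (Real.rpow_nonneg (by linarith [hτ.2]) _),
      abs_of_nonneg (Real.rpow_nonneg hτ.1.le _), mul_assoc]
    refine mul_le_mul_of_nonneg_left ?_ (Real.rpow_nonneg (by linarith [hτ.2]) _)
    exact mul_le_mul_of_nonneg_left (hbd _) (Real.rpow_nonneg hτ.1.le _)
  · exact (kIoo_int hp hq).mul_const C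
  · filter_upwards with τ
    fun_prop

lemma Wbound {h : ℝ → ℝ} {C p q : ℝ} (hp : 0 < p) (hq : 0 < q)
    (hbd : ∀ x, |h x| ≤ C) :
    |∫ τ in Set.Ioo (0:ℝ) 1, (1 - τ) ^ (p - 1) * (τ ^ (q - 1) * h τ)| ≤
      C * ∫ τ in Set.Ioo (0:ℝ) 1, (1 - τ) ^ (p - 1) * τ ^ (q - 1) := by
  have hker := kIoo_int hp hq
  have := norm_integral_le_of_norm_le (hker.const_mul C)
    (f := fun τ => (1 - τ) ^ (p - 1) * (τ ^ (q - 1) * h τ)) ?_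
  · rw [Real.norm_eq_abs] at this
    calc |_| ≤ ∫ τ in Set.Ioo (0:ℝ) 1, C * ((1 - τ) ^ (p - 1) * τ ^ (q - 1)) := this
      _ = C * ∫ τ in Set.Ioo (0:ℝ) 1, (1 - τ) ^ (p - 1) * τ ^ (q - 1) := integral_const_mul _ _
  · filter_upwards [ae_restrict_mem measurableSet_Ioo] with τ hτ
    rw [Real.norm_eq_abs, abs_mul, abs_mul,
      abs_of_nonneg (Real.rpow_nonneg (by linarith [hτ.2]) _),
      abs_of_nonneg (Real.rpow_nonneg hτ.1.le _)]
    have hC : 0 ≤ C := le_trans (abs_nonneg _) (hbd 0)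
    calc (1 - τ) ^ (p - 1) * (τ ^ (q - 1) * |h τ|) ≤
        (1 - τ) ^ (p - 1) * (τ ^ (q - 1) * C) := by
          refine mul_le_mul_of_nonneg_left ?_ (Real.rpow_nonneg (by linarith [hτ.2]) _)
          exact mul_le_mul_of_nonneg_left (hbd _) (Real.rpow_nonneg hτ.1.le _)
      _ = C * ((1 - τ) ^ (p - 1) * τ ^ (q - 1)) := by ring


noncomputable def B0 (p q : ℝ) : ℝ := ∫ τ in Set.Ioo (0:ℝ) 1, (1 - τ) ^ (p - 1) * τ ^ (q - 1)

lemma B0_eq {p q : ℝ} (hp : 0 < p) (hq : 0 < q) :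
    B0 p q = Real.Gamma p * Real.Gamma q / Real.Gamma (p + q) := by
  rw [B0, ← MeasureTheory.integral_Ioc_eq_integral_Ioo,
    ← intervalIntegral.integral_of_le (by norm_num : (0:ℝ) ≤ 1), real_beta hp hq]

lemma Phi_eq {c t : ℝ} (p q : ℝ) (hct : c < t) (H : ℝ → ℝ) :
    ∫ s in Set.Ioo c t, (t - s) ^ (p - 1) * ((s - c) ^ (q - 1) * H s) =
      (t - c) ^ (p + q - 1) *
        ∫ τ in Set.Ioo (0:ℝ) 1, (1 - τ) ^ (p - 1) * (τ ^ (q - 1) * H (c + (t - c) * τ)) := by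
  rw [← MeasureTheory.integral_Ioc_eq_integral_Ioo, ← intervalIntegral.integral_of_le hct.le,
    subst_affine p q hct H, intervalIntegral.integral_of_le (by norm_num : (0:ℝ) ≤ 1),
    MeasureTheory.integral_Ioc_eq_integral_Ioo]

lemma Phi_abs_le {c d p q C : ℝ} (hcd : c < d) (hp : 0 < p) (hq : 0 < q)
    {H : ℝ → ℝ} (hbd : ∀ x, |H x| ≤ C) :
    |∫ s in Set.Ioo c d, (d - s) ^ (p - 1) * ((s - c) ^ (q - 1) * H s)| ≤
      C * B0 p q * (d - c) ^ (p + q - 1) := by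
  rw [Phi_eq p q hcd H, abs_mul, abs_of_nonneg (Real.rpow_nonneg (by linarith) _)]
  have := Wbound (h := fun τ => H (c + (d - c) * τ)) hp hq (fun x => hbd _)
  calc (d - c) ^ (p + q - 1) * |∫ τ in Set.Ioo (0:ℝ) 1, (1 - τ) ^ (p - 1) * (τ ^ (q - 1) * H (c + (d - c) * τ))|
      ≤ (d - c) ^ (p + q - 1) * (C * B0 p q) :=
        mul_le_mul_of_nonneg_left this (Real.rpow_nonneg (by linarith) _)
    _ = C * B0 p q * (d - c) ^ (p + q - 1) := by ring



lemma fubini_step {a t α γ : ℝ} (hat : a < t) (hα : 0 < α) (hγ0 : 0 < γ) (hγ1 : γ < 1)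
    {G : ℝ → ℝ} {C : ℝ} (hG : Continuous G) (hC : ∀ x, |G x| ≤ C) :
    ∫ s in Set.Ioo a t, (t - s) ^ (-γ) *
        ∫ u in Set.Ioo a s, (s - u) ^ (α - 1) * ((u - a) ^ (γ - 1) * G u) =
      ∫ u in Set.Ioo a t,
        (∫ s in Set.Ioo u t, (t - s) ^ (-γ) * (s - u) ^ (α - 1)) *
          ((u - a) ^ (γ - 1) * G u) := by
  have hC0 : 0 ≤ C := le_trans (abs_nonneg _) (hC 0)
  set μ := volume.restrict (Set.Ioo a t) with hμ
  set Fc : ℝ → ℝ := fun u => (u - a) ^ (γ - 1) * G u with hFc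
  set f : ℝ → ℝ → ℝ :=
    fun s u => if u < s then (t - s) ^ (-γ) * ((s - u) ^ (α - 1) * Fc u) else 0 with hf
  have hFcmeas : Measurable Fc := by fun_prop
  have hFcbd : ∀ u, a < u → |Fc u| ≤ C * (u - a) ^ (γ - 1) := by
    intro u hu
    rw [hFc, abs_mul, abs_of_nonneg (Real.rpow_nonneg (by linarith) _)]
    calc (u - a) ^ (γ - 1) * |G u| ≤ (u - a) ^ (γ - 1) * C :=
          mul_le_mul_of_nonneg_left (hC u) (Real.rpow_nonneg (by linarith) _)
      _ = C * (u - a) ^ (γ - 1) := mul_comm _ _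
  have hmeas : Measurable (Function.uncurry f) := by
    have : Function.uncurry f = fun p : ℝ × ℝ =>
        if p.2 < p.1 then (t - p.1) ^ (-γ) * ((p.1 - p.2) ^ (α - 1) * Fc p.2) else 0 := rfl
    rw [this]
    exact Measurable.ite (measurableSet_lt measurable_snd measurable_fst) (by fun_prop)
      measurable_const
  -- slice integrability
  have hslice : ∀ s ∈ Set.Ioo a t, Integrable (f s) μ := by
    intro s hs
    have hIO : IntegrableOn
        (fun u => (t - s) ^ (-γ) * ((s - u) ^ (α - 1) * Fc u)) (Set.Ioo a s) := by
      exact ((weighted_integrableOn hs.1 hα hγ0 hFcmeas.aestronglyMeasurable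
        (fun u hu => hFcbd u hu.1)).const_mul _).congr
          (Filter.EventuallyEq.of_eq (funext fun u => by ring))
    have h2 := (hIO.integrable_indicator measurableSet_Ioo).restrict (s := Set.Ioo a t)
    refine h2.congr ?_
    filter_upwards [ae_restrict_mem measurableSet_Ioo] with u hu
    simp only [Set.indicator_apply, Set.mem_Ioo, hf]
    by_cases h : u < s <;> simp [h, hu.1]
  -- dominating function for the iterated norms
  set g : ℝ → ℝ := fun s => (t - s) ^ (-γ) * (C * B0 α γ * (s - a) ^ (α + γ - 1)) with hg
  have hgint : Integrable g μ := by
    have h0 : (0:ℝ) < α + γ := by linarith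
    have := weighted_integrableOn (c := a) (d := t) hat (by linarith : (0:ℝ) < 1 - γ) h0
      (H := fun s => C * B0 α γ * (s - a) ^ (α + γ - 1))
      (C := |C * B0 α γ|) (by fun_prop : Measurable _).aestronglyMeasurable ?_
    · refine this.congr (Filter.EventuallyEq.of_eq (funext fun s => ?_))
      rw [show (1 - γ) - 1 = -γ by ring, show α + γ - 1 = (α + γ) - 1 by ring]
    · intro u hu
      rw [abs_mul, abs_of_nonneg (Real.rpow_nonneg (by linarith [hu.1]) _)]
  -- pointwise bound for iterated norm integrals
  have hnorm_bound : ∀ s ∈ Set.Ioo a t, (∫ u, ‖f s u‖ ∂μ) ≤ g s := by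
    intro s hs
    have h1 : (∫ u, ‖f s u‖ ∂μ) = (t - s) ^ (-γ) *
        ∫ u in Set.Ioo a s, (s - u) ^ (α - 1) * ((u - a) ^ (γ - 1) * |G u|) := by
      have hcongr : ∀ᵐ u ∂μ, ‖f s u‖ = (Set.Ioo a s).indicator
          (fun u => (t - s) ^ (-γ) * ((s - u) ^ (α - 1) * ((u - a) ^ (γ - 1) * |G u|))) u := by
        filter_upwards [ae_restrict_mem measurableSet_Ioo] with u hu
        simp only [Set.indicator_apply, Set.mem_Ioo, hf]
        by_cases h : u < s
        · simp only [h, hu.1, and_self, if_true, if_pos h]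
          rw [Real.norm_eq_abs, abs_mul, abs_mul, hFc, abs_mul,
            abs_of_nonneg (Real.rpow_nonneg (by linarith [hs.2, h] : (0:ℝ) ≤ t - s) _),
            abs_of_nonneg (Real.rpow_nonneg (by linarith : (0:ℝ) ≤ s - u) _),
            abs_of_nonneg (Real.rpow_nonneg (by linarith [hu.1] : (0:ℝ) ≤ u - a) _)]
        · simp [h, hu.1]
      rw [integral_congr_ae hcongr, hμ, MeasureTheory.integral_indicator measurableSet_Ioo,
        Measure.restrict_restrict measurableSet_Ioo,
        Set.inter_eq_self_of_subset_left (Set.Ioo_subset_Ioo_right hs.2.le),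
        MeasureTheory.integral_const_mul]
    rw [h1, hg]
    refine mul_le_mul_of_nonneg_left ?_ (Real.rpow_nonneg (by linarith [hs.2]) _)
    have hb := Phi_abs_le (c := a) (d := s) hs.1 hα hγ0 (H := fun u => |G u|)
      (fun x => by rw [abs_abs]; exact hC x)
    exact le_trans (le_abs_self _) hb
  -- full integrability on the product
  have hint : Integrable (Function.uncurry f) (μ.prod μ) := by
    rw [MeasureTheory.integrable_prod_iff hmeas.aestronglyMeasurable]
    constructor
    · filter_upwards [ae_restrict_mem measurableSet_Ioo] with s hs using hslice s hs
    · refine hgint.mono' ?_ ?_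
      · exact (hmeas.norm.aestronglyMeasurable).integral_prod_right'
      · filter_upwards [ae_restrict_mem measurableSet_Ioo] with s hs
        rw [Real.norm_eq_abs, abs_of_nonneg (integral_nonneg fun u => norm_nonneg _)]
        exact hnorm_bound s hs
  have hswap := MeasureTheory.integral_integral_swap hint
  -- identify the two sides
  have hLHS : (∫ s, (∫ u, f s u ∂μ) ∂μ) = ∫ s in Set.Ioo a t, (t - s) ^ (-γ) *
      ∫ u in Set.Ioo a s, (s - u) ^ (α - 1) * ((u - a) ^ (γ - 1) * G u) := by
    refine integral_congr_ae ?_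
    filter_upwards [ae_restrict_mem measurableSet_Ioo] with s hs
    have hcongr : ∀ᵐ u ∂μ, f s u = (Set.Ioo a s).indicator
        (fun u => (t - s) ^ (-γ) * ((s - u) ^ (α - 1) * Fc u)) u := by
      filter_upwards [ae_restrict_mem measurableSet_Ioo] with u hu
      simp only [Set.indicator_apply, Set.mem_Ioo, hf]
      by_cases h : u < s <;> simp [h, hu.1]
    rw [integral_congr_ae hcongr, hμ, MeasureTheory.integral_indicator measurableSet_Ioo,
      Measure.restrict_restrict measurableSet_Ioo,
      Set.inter_eq_self_of_subset_left (Set.Ioo_subset_Ioo_right hs.2.le),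
      MeasureTheory.integral_const_mul]
  have hRHS : (∫ u, (∫ s, f s u ∂μ) ∂μ) = ∫ u in Set.Ioo a t,
      (∫ s in Set.Ioo u t, (t - s) ^ (-γ) * (s - u) ^ (α - 1)) * ((u - a) ^ (γ - 1) * G u) := by
    refine integral_congr_ae ?_
    filter_upwards [ae_restrict_mem measurableSet_Ioo] with u hu
    have hcongr : ∀ᵐ s ∂μ, f s u = (Set.Ioo u t).indicator
        (fun s => ((t - s) ^ (-γ) * (s - u) ^ (α - 1)) * Fc u) s := by
      filter_upwards [ae_restrict_mem measurableSet_Ioo] with s hs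
      simp only [Set.indicator_apply, Set.mem_Ioo, hf]
      by_cases h : u < s
      · simp only [h, hs.2, and_self, if_true, if_pos h]
        ring
      · simp [h, hs.2]
    rw [integral_congr_ae hcongr, hμ, MeasureTheory.integral_indicator measurableSet_Ioo,
      Measure.restrict_restrict measurableSet_Ioo,
      Set.inter_eq_self_of_subset_left (Set.Ioo_subset_Ioo_left hu.1.le),
      MeasureTheory.integral_mul_const]
  rw [← hLHS, ← hRHS, hswap]

/-- Fix `a < b`, `α ∈ (0,1)`, `β ∈ [0,1]`, `γ = α + β(1−α)`.  Let
`F ∈ C_{1−γ}[a,b]`, `z_a ∈ ℝ`, and define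
`z(t) = z_a (t−a)^{γ−1}/Γ(γ) + (1/Γ(α)) ∫_a^t (t−s)^{α−1} F(s) ds` on `(a,b]`.
Then for every `t ∈ (a,b]`,
`(I^{1−γ}_a z)(t) = z_a + (1/Γ(1−γ+α)) ∫_a^t (t−s)^{α−γ} F(s) ds`;
in particular `lim_{t→a⁺}(I^{1−γ}_a z)(t) = z_a` and
`lim_{t→b⁻}(I^{1−γ}_a z)(t) = z_a + (1/Γ(1−γ+α)) ∫_a^b (b−s)^{α−γ} F(s) ds`. -/
theorem rl_int_of_volterra_solution (a b α β γ : ℝ) (hab : a < b)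
    (hα0 : 0 < α) (hα1 : α < 1) (hβ0 : 0 ≤ β) (hβ1 : β ≤ 1)
    (hγ : γ = α + β * (1 - α))
    (F : ℝ → ℝ) (hF : memCw a b (1 - γ) F) (za : ℝ) (z : ℝ → ℝ)
    (hz : ∀ t ∈ Set.Ioc a b,
      z t = za * (t - a) ^ (γ - 1) / Real.Gamma γ +
        (1 / Real.Gamma α) * ∫ s in a..t, (t - s) ^ (α - 1) * F s) :
    (∀ t ∈ Set.Ioc a b,
        rlInt a (1 - γ) z t =
          za + (1 / Real.Gamma (1 - γ + α)) * ∫ s in a..t, (t - s) ^ (α - γ) * F s) ∧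
      Filter.Tendsto (rlInt a (1 - γ) z) (nhdsWithin a (Set.Ioi a)) (nhds za) ∧
      Filter.Tendsto (rlInt a (1 - γ) z) (nhdsWithin b (Set.Iio b))
        (nhds (za + (1 / Real.Gamma (1 - γ + α)) *
          ∫ s in a..b, (b - s) ^ (α - γ) * F s)) := by
  obtain ⟨G, hGcont, hGeq⟩ := hF
  have hγ0 : 0 < γ := by nlinarith
  have hγle : γ ≤ 1 := by nlinarith
  have hp3 : 0 < α - γ + 1 := by nlinarith
  have hΓα : Real.Gamma α ≠ 0 := (Real.Gamma_pos_of_pos hα0).ne'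
  have hΓγ : Real.Gamma γ ≠ 0 := (Real.Gamma_pos_of_pos hγ0).ne'
  have hΓs : Real.Gamma (1 - γ + α) ≠ 0 := (Real.Gamma_pos_of_pos (by linarith)).ne'
  -- bounded continuous extension of G
  set Gc : ℝ → ℝ := fun x => G ((Set.projIcc a b hab.le x : Set.Icc a b) : ℝ) with hGcdef
  have hGcCont : Continuous Gc :=
    hGcont.comp_continuous (continuous_subtype_val.comp continuous_projIcc)
      (fun x => Subtype.coe_prop _)
  have hGcEq : ∀ x ∈ Set.Icc a b, Gc x = G x := by
    intro x hx; rw [hGcdef]; simp [Set.projIcc_of_mem hab.le hx]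
  obtain ⟨C0, hC0⟩ := (isCompact_Icc (a := a) (b := b)).exists_bound_of_continuousOn hGcont
  set C := max C0 0 with hCdef
  have hCbd : ∀ x, |Gc x| ≤ C := by
    intro x
    have h1 := hC0 _ (Subtype.coe_prop (Set.projIcc a b hab.le x))
    rw [Real.norm_eq_abs] at h1
    exact le_trans h1 (le_max_left _ _)
  have hFcF : ∀ u ∈ Set.Ioc a b, F u = (u - a) ^ (γ - 1) * Gc u := by
    intro u hu
    have h1 : Gc u = (u - a) ^ (1 - γ) * F u := by
      rw [hGcEq u (Set.Ioc_subset_Icc_self hu)]; exact hGeq u hu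
    rw [h1, ← mul_assoc, ← Real.rpow_add (by linarith [hu.1] : (0:ℝ) < u - a),
      show γ - 1 + (1 - γ) = 0 by ring, Real.rpow_zero, one_mul]
  -- conversion of the F-integral to the canonical Φ shape
  have hfinal : ∀ t ∈ Set.Ioc a b, (∫ s in a..t, (t - s) ^ (α - γ) * F s) =
      ∫ s in Set.Ioo a t, (t - s) ^ ((α - γ + 1) - 1) * ((s - a) ^ (γ - 1) * Gc s) := by
    intro t ht
    rw [intervalIntegral.integral_of_le ht.1.le, MeasureTheory.integral_Ioc_eq_integral_Ioo]
    refine setIntegral_congr_fun measurableSet_Ioo (fun s hs => ?_)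
    rw [hFcF s ⟨hs.1, hs.2.le.trans ht.2⟩, show (α - γ + 1) - 1 = α - γ by ring]
  -- the main identity on (a, b]
  have main : ∀ t ∈ Set.Ioc a b, rlInt a (1 - γ) z t =
      za + (1 / Real.Gamma (1 - γ + α)) * ∫ s in a..t, (t - s) ^ (α - γ) * F s := by
    intro t ht
    rcases eq_or_lt_of_le hγle with hγe | hγe
    · -- degenerate case γ = 1
      have h0 : (1:ℝ) - γ = 0 := by rw [hγe]; ring
      rw [rlInt, if_pos h0, hz t ht, show γ - 1 = 0 by rw [hγe]; ring, Real.rpow_zero,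
        hγe, Real.Gamma_one, show (1:ℝ) - 1 + α = α by ring, show α - (1:ℝ) = α - 1 by ring]
      ring
    · -- main case γ < 1
      have h1γ : (0:ℝ) < 1 - γ := by linarith
      have hat : a < t := ht.1
      have hne : (1:ℝ) - γ ≠ 0 := h1γ.ne'
      have hΓ1γ : Real.Gamma (1 - γ) ≠ 0 := (Real.Gamma_pos_of_pos h1γ).ne'
      rw [rlInt, if_neg hne, intervalIntegral.integral_of_le hat.le,
        MeasureTheory.integral_Ioc_eq_integral_Ioo]
      have hsplit : ∀ s ∈ Set.Ioo a t, (t - s) ^ (1 - γ - 1) * z s =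
          (za / Real.Gamma γ) * ((t - s) ^ ((1 - γ) - 1) * ((s - a) ^ (γ - 1) * 1)) +
          (1 / Real.Gamma α) * ((t - s) ^ (-γ) *
            ∫ u in Set.Ioo a s, (s - u) ^ (α - 1) * ((u - a) ^ (γ - 1) * Gc u)) := by
        intro s hs
        have hsab : s ∈ Set.Ioc a b := ⟨hs.1, hs.2.le.trans ht.2⟩
        have hJ : (∫ u in a..s, (s - u) ^ (α - 1) * F u) =
            ∫ u in Set.Ioo a s, (s - u) ^ (α - 1) * ((u - a) ^ (γ - 1) * Gc u) := by
          rw [intervalIntegral.integral_of_le hs.1.le, MeasureTheory.integral_Ioc_eq_integral_Ioo]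
          exact setIntegral_congr_fun measurableSet_Ioo fun u hu => by
            rw [hFcF u ⟨hu.1, hu.2.le.trans hsab.2⟩]
        rw [hz s hsab, hJ, show (1:ℝ) - γ - 1 = -γ by ring]
        ring
      rw [setIntegral_congr_fun measurableSet_Ioo hsplit]
      -- measurability of the inner integral as a function of s
      have hWc : Continuous (fun s : ℝ => ∫ τ in Set.Ioo (0:ℝ) 1,
          (1 - τ) ^ (α - 1) * (τ ^ (γ - 1) * Gc (a + (s - a) * τ))) :=
        Wcont hGcCont hCbd α γ a hα0 hγ0
      have hJmeas : AEStronglyMeasurable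
          (fun s => ∫ u in Set.Ioo a s, (s - u) ^ (α - 1) * ((u - a) ^ (γ - 1) * Gc u))
          (volume.restrict (Set.Ioo a t)) := by
        refine AEStronglyMeasurable.congr
          (f := fun s => (s - a) ^ (α + γ - 1) * ∫ τ in Set.Ioo (0:ℝ) 1,
            (1 - τ) ^ (α - 1) * (τ ^ (γ - 1) * Gc (a + (s - a) * τ)))
          (((by fun_prop : Measurable (fun s : ℝ => (s - a) ^ (α + γ - 1))).aestronglyMeasurable).mul
            hWc.measurable.aestronglyMeasurable) ?_
        filter_upwards [ae_restrict_mem measurableSet_Ioo] with s hs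
        exact (Phi_eq α γ hs.1 Gc).symm
      -- integrability of the two pieces
      have hA : IntegrableOn (fun s => (za / Real.Gamma γ) *
          ((t - s) ^ ((1 - γ) - 1) * ((s - a) ^ (γ - 1) * 1))) (Set.Ioo a t) := by
        refine (weighted_integrableOn hat h1γ hγ0 (H := fun s => (s - a) ^ (γ - 1) * 1)
          (C := 1) (by fun_prop : Measurable _).aestronglyMeasurable ?_).const_mul _
        intro u hu
        simp only [mul_one, one_mul]
        exact le_of_eq (abs_of_nonneg (Real.rpow_nonneg (by linarith [hu.1]) _))
      have hB : IntegrableOn (fun s => (1 / Real.Gamma α) * ((t - s) ^ (-γ) *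
          ∫ u in Set.Ioo a s, (s - u) ^ (α - 1) * ((u - a) ^ (γ - 1) * Gc u)))
          (Set.Ioo a t) := by
        have hw := weighted_integrableOn hat h1γ (show (0:ℝ) < α + γ by linarith)
          (H := fun s => ∫ u in Set.Ioo a s, (s - u) ^ (α - 1) * ((u - a) ^ (γ - 1) * Gc u))
          (C := C * B0 α γ) hJmeas ?_
        · refine (hw.congr (Filter.EventuallyEq.of_eq (funext fun s => ?_))).const_mul _
          rw [show (1 - γ) - 1 = -γ by ring]
        · intro u hu
          have hb := Phi_abs_le (c := a) (d := u) hu.1 hα0 hγ0 (H := Gc) hCbd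
          calc |∫ v in Set.Ioo a u, (u - v) ^ (α - 1) * ((v - a) ^ (γ - 1) * Gc v)|
              ≤ C * B0 α γ * (u - a) ^ (α + γ - 1) := hb
            _ = C * B0 α γ * (u - a) ^ ((α + γ) - 1) := by ring_nf
      rw [MeasureTheory.integral_add hA hB, MeasureTheory.integral_const_mul,
        MeasureTheory.integral_const_mul]
      rw [Phi_eq (1 - γ) γ hat (fun _ => (1:ℝ))]
      rw [fubini_step hat hα0 hγ0 hγe hGcCont hCbd]
      have hK : ∀ u ∈ Set.Ioo a t,
          (∫ s in Set.Ioo u t, (t - s) ^ (-γ) * (s - u) ^ (α - 1)) *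
            ((u - a) ^ (γ - 1) * Gc u) =
          B0 (1 - γ) α * ((t - u) ^ ((α - γ + 1) - 1) * ((u - a) ^ (γ - 1) * Gc u)) := by
        intro u hu
        have h1 : (∫ s in Set.Ioo u t, (t - s) ^ (-γ) * (s - u) ^ (α - 1)) =
            ∫ s in Set.Ioo u t, (t - s) ^ ((1 - γ) - 1) * ((s - u) ^ (α - 1) * 1) := by
          exact setIntegral_congr_fun measurableSet_Ioo fun s _ => by
            rw [mul_one, show (1 - γ) - 1 = -γ by ring]
        have h2 : (∫ τ in Set.Ioo (0:ℝ) 1, (1 - τ) ^ ((1 - γ) - 1) * (τ ^ (α - 1) * 1)) =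
            B0 (1 - γ) α := by
          rw [B0]
          exact setIntegral_congr_fun measurableSet_Ioo fun τ _ => by rw [mul_one]
        rw [h1, Phi_eq (1 - γ) α hu.2 (fun _ => (1:ℝ)), h2,
          show (1 - γ) + α - 1 = (α - γ + 1) - 1 by ring]
        ring
      rw [setIntegral_congr_fun measurableSet_Ioo hK, MeasureTheory.integral_const_mul]
      have hBA : (∫ τ in Set.Ioo (0:ℝ) 1, (1 - τ) ^ ((1 - γ) - 1) * (τ ^ (γ - 1) * 1)) =
          Real.Gamma (1 - γ) * Real.Gamma γ := by
        have h3 : (∫ τ in Set.Ioo (0:ℝ) 1, (1 - τ) ^ ((1 - γ) - 1) * (τ ^ (γ - 1) * 1)) =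
            B0 (1 - γ) γ := by
          rw [B0]
          exact setIntegral_congr_fun measurableSet_Ioo fun τ _ => by rw [mul_one]
        rw [h3, B0_eq h1γ hγ0, show (1:ℝ) - γ + γ = 1 by ring, Real.Gamma_one, div_one]
      rw [show (1 - γ) + γ - 1 = 0 by ring, Real.rpow_zero, hBA, B0_eq h1γ hα0,
        hfinal t ht]
      field_simp
  -- the Ψ-representation used for both limits
  set W : ℝ → ℝ := fun t => ∫ τ in Set.Ioo (0:ℝ) 1,
    (1 - τ) ^ ((α - γ + 1) - 1) * (τ ^ (γ - 1) * Gc (a + (t - a) * τ)) with hWdef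
  have hWcont : Continuous W := Wcont hGcCont hCbd (α - γ + 1) γ a hp3 hγ0
  have hrep : ∀ t ∈ Set.Ioc a b,
      (∫ s in a..t, (t - s) ^ (α - γ) * F s) = (t - a) ^ α * W t := by
    intro t ht
    rw [hfinal t ht, Phi_eq (α - γ + 1) γ ht.1 Gc,
      show (α - γ + 1) + γ - 1 = α by ring]
  have hΨcont : ∀ x : ℝ, Filter.Tendsto
      (fun t => za + (1 / Real.Gamma (1 - γ + α)) * ((t - a) ^ α * W t)) (nhds x)
      (nhds (za + (1 / Real.Gamma (1 - γ + α)) * ((x - a) ^ α * W x))) := by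
    intro x
    have h1 : ContinuousAt (fun t : ℝ => (t - a) ^ α) x := by
      have h2 : ContinuousAt (fun y : ℝ => y ^ α) (x - a) :=
        Real.continuousAt_rpow_const _ _ (Or.inr hα0.le)
      have h3 : ContinuousAt (fun t : ℝ => t - a) x :=
        (continuous_id.sub continuous_const).continuousAt
      have h4 : ContinuousAt ((fun y : ℝ => y ^ α) ∘ (fun t : ℝ => t - a)) x :=
        ContinuousAt.comp h2 h3
      exact h4
    exact (continuousAt_const.add (continuousAt_const.mul
      (h1.mul hWcont.continuousAt))).tendsto
  refine ⟨main, ?_, ?_⟩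
  · -- limit at a
    have hev : ∀ᶠ t in nhdsWithin a (Set.Ioi a),
        rlInt a (1 - γ) z t =
          za + (1 / Real.Gamma (1 - γ + α)) * ((t - a) ^ α * W t) := by
      filter_upwards [Ioo_mem_nhdsGT_of_mem (⟨le_refl a, hab⟩ : a ∈ Set.Ico a b)] with t htm
      have htc : t ∈ Set.Ioc a b := ⟨htm.1, htm.2.le⟩
      rw [main t htc, hrep t htc]
    have h0 : za + (1 / Real.Gamma (1 - γ + α)) * ((a - a) ^ α * W a) = za := by
      rw [sub_self, Real.zero_rpow hα0.ne', zero_mul, mul_zero, add_zero]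
    have hT := (hΨcont a).mono_left (nhdsWithin_le_nhds (s := Set.Ioi a))
    rw [h0] at hT
    exact hT.congr' (hev.mono fun t h => h.symm)
  · -- limit at b
    have hev : ∀ᶠ t in nhdsWithin b (Set.Iio b),
        rlInt a (1 - γ) z t =
          za + (1 / Real.Gamma (1 - γ + α)) * ((t - a) ^ α * W t) := by
      filter_upwards [Ioo_mem_nhdsLT_of_mem (⟨hab, le_refl b⟩ : b ∈ Set.Ioc a b)] with t htm
      have htc : t ∈ Set.Ioc a b := ⟨htm.1, htm.2.le⟩
      rw [main t htc, hrep t htc]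
    have h0 : za + (1 / Real.Gamma (1 - γ + α)) * ((b - a) ^ α * W b) =
        za + (1 / Real.Gamma (1 - γ + α)) * ∫ s in a..b, (b - s) ^ (α - γ) * F s := by
      rw [← hrep b ⟨hab, le_refl b⟩]
    have hT := (hΨcont b).mono_left (nhdsWithin_le_nhds (s := Set.Iio b))
    rw [h0] at hT
    exact hT.congr' (hev.mono fun t h => h.symm)
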